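/- For 0 < q < p ≤ 1, natural number n, and x ∈ [0,1], the second moment of the (p,q)-Meyer-König and Zeller operator satisfies the two-sided estimate x² ≤ M_{n,p,q}(t²; x) ≤ (p^n / [n+1]_{p,q}) x + x². -/

import Mathlib

open Filter Topology

noncomputable def pqInt (p q : ℝ) (n : ℕ) : ℝ := (p ^ n - q ^ n) / (p - q)

noncomputable def pqFact (p q : ℝ) (n : ℕ) : ℝ :=
  ∏ j ∈ Finset.range n, pqInt p q (j + 1)

noncomputable def pqBinom (p q : ℝ) (n k : ℕ) : ℝ :=
  pqFact p q n / (pqFact p q k * pqFact p q (n - k))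

noncomputable def mkz (p q : ℝ) (n : ℕ) (f : ℝ → ℝ) (x : ℝ) : ℝ :=
  if x = 1 then f 1 else
    (p ^ (n * (n + 1) / 2))⁻¹ *
      ∑' k : ℕ, pqBinom p q (n + k) k * x ^ k * (p ^ (k * n))⁻¹ *
        (∏ s ∈ Finset.range (n + 1), (p ^ s - q ^ s * x)) *
        f (p ^ n * pqInt p q k / pqInt p q (n + k))

noncomputable def supNorm (g : ℝ → ℝ) : ℝ :=
  sSup ((fun x => |g x|) '' Set.Icc (0 : ℝ) 1)

noncomputable def modCont (f : ℝ → ℝ) (δ : ℝ) : ℝ :=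
  sSup ((fun p : ℝ × ℝ => |f p.1 - f p.2|) ''
    {p : ℝ × ℝ | p.1 ∈ Set.Icc (0 : ℝ) 1 ∧ p.2 ∈ Set.Icc (0 : ℝ) 1 ∧ |p.1 - p.2| ≤ δ})

def StatLim (x : ℕ → ℝ) (L : ℝ) : Prop :=
  ∀ ε > 0, Filter.Tendsto
    (fun n => (((Finset.range (n + 1)).filter (fun k => ε ≤ |x k - L|)).card : ℝ) / (n : ℝ))
    Filter.atTop (nhds 0)

/-!
Put `t = q / p`. Pulling the powers of `p` out of the `(p,q)`-integers turns `M_{n,p,q}(f; x)` into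
`∑ₖ wₖ f(ξₖ)` with weights `wₖ = ∏_{s ≤ n} (1 - tˢ x) [n+k choose k]_t xᵏ` and nodes
`ξₖ = [k]_t / [n+k]_t`. The weights sum to `1` by the `q`-binomial theorem for negative exponents.
Since `w_{k+1} ξ_{k+1} = x wₖ` and `ξ₀ = 0`, multiplying by the nodes shifts the weights:
`∑ wₖ ξₖ = x` and `M(t²; x) = x ∑ wₖ ξ_{k+1}`. Finally `ξₖ ≤ ξ_{k+1} ≤ ξₖ + 1 / [n+1]_t`, so
`∑ wₖ ξ_{k+1}` lies between `x` and `x + 1 / [n+1]_t = x + pⁿ / [n+1]_{p,q}`.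
-/

open Finset

theorem pqFact_zero (p q : ℝ) : pqFact p q 0 = 1 := prod_range_zero _

theorem pqFact_succ (p q : ℝ) (n : ℕ) : pqFact p q (n + 1) = pqFact p q n * pqInt p q (n + 1) :=
  prod_range_succ _ n

theorem pqBinom_add_left (p q : ℝ) (n k : ℕ) :
    pqBinom p q (n + k) k = pqFact p q (n + k) / (pqFact p q k * pqFact p q n) := by
  rw [pqBinom, Nat.add_sub_cancel]

theorem sum_range_id_add (n k : ℕ) :
    ∑ i ∈ range (n + k), i = ∑ i ∈ range k, i + ∑ i ∈ range n, i + k * n := by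
  rw [add_comm n k, sum_range_add, sum_add_distrib, sum_const, card_range, smul_eq_mul]
  ring

section OneLeft

variable {t x : ℝ}

theorem pqInt_one_left (m : ℕ) : pqInt 1 t m = (1 - t ^ m) / (1 - t) := by
  simp [pqInt]

theorem pqInt_one_left_pos (ht0 : 0 ≤ t) (ht1 : t < 1) {m : ℕ} (hm : m ≠ 0) :
    0 < pqInt 1 t m := by
  have := pow_lt_one₀ ht0 ht1 hm
  rw [pqInt_one_left]
  apply div_pos <;> linarith

theorem pqInt_one_left_nonneg (ht0 : 0 ≤ t) (ht1 : t < 1) (m : ℕ) : 0 ≤ pqInt 1 t m := by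
  have : t ^ m ≤ 1 := pow_le_one₀ ht0 ht1.le
  rw [pqInt_one_left]
  apply div_nonneg <;> linarith

theorem pqInt_one_left_le (ht0 : 0 ≤ t) (ht1 : t < 1) (m : ℕ) : pqInt 1 t m ≤ (1 - t)⁻¹ := by
  have := pow_nonneg ht0 m
  rw [pqInt_one_left, div_eq_mul_inv]
  exact mul_le_of_le_one_left (inv_nonneg.2 (by linarith)) (by linarith)

theorem pqInt_one_left_mono (ht0 : 0 ≤ t) (ht1 : t < 1) : Monotone (pqInt 1 t) := fun m m' h => by
  have := pow_le_pow_of_le_one ht0 ht1.le h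
  rw [pqInt_one_left, pqInt_one_left]
  exact div_le_div_of_nonneg_right (by linarith) (by linarith)

theorem pqInt_one_left_one (ht : t ≠ 1) : pqInt 1 t 1 = 1 := by
  rw [pqInt_one_left, pow_one, div_self (sub_ne_zero.2 ht.symm)]

theorem pqInt_one_left_add (ht : t ≠ 1) (a b : ℕ) :
    pqInt 1 t (a + b) = pqInt 1 t a + t ^ a * pqInt 1 t b := by
  have := sub_ne_zero.2 ht.symm
  simp only [pqInt_one_left]
  field_simp
  ring

theorem pqFact_one_left_pos (ht0 : 0 ≤ t) (ht1 : t < 1) (n : ℕ) : 0 < pqFact 1 t n :=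
  prod_pos fun j _ => pqInt_one_left_pos ht0 ht1 j.succ_ne_zero

theorem pqBinom_one_left_add_zero (ht0 : 0 ≤ t) (ht1 : t < 1) (n : ℕ) :
    pqBinom 1 t (n + 0) 0 = 1 := by
  rw [pqBinom_add_left, pqFact_zero, one_mul, add_zero,
    div_self (pqFact_one_left_pos ht0 ht1 n).ne']

theorem pqBinom_one_left_zero_add (ht0 : 0 ≤ t) (ht1 : t < 1) (k : ℕ) :
    pqBinom 1 t (0 + k) k = 1 := by
  rw [pqBinom_add_left, pqFact_zero, mul_one, zero_add,
    div_self (pqFact_one_left_pos ht0 ht1 k).ne']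

theorem pqBinom_one_left_nonneg (ht0 : 0 ≤ t) (ht1 : t < 1) (n k : ℕ) :
    0 ≤ pqBinom 1 t (n + k) k := by
  have hfact := pqFact_one_left_pos ht0 ht1
  rw [pqBinom_add_left]
  exact div_nonneg (hfact _).le (mul_pos (hfact k) (hfact n)).le

theorem pqBinom_one_left_le (ht0 : 0 ≤ t) (ht1 : t < 1) (n k : ℕ) :
    pqBinom 1 t (n + k) k ≤ (1 - t)⁻¹ ^ n / pqFact 1 t n := by
  have hfact := pqFact_one_left_pos ht0 ht1
  have hsplit : pqFact 1 t (n + k) = pqFact 1 t k * ∏ i ∈ range n, pqInt 1 t (k + i + 1) := by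
    rw [add_comm n k, pqFact, prod_range_add]
    rfl
  have hprod : ∏ i ∈ range n, pqInt 1 t (k + i + 1) ≤ (1 - t)⁻¹ ^ n := by
    simpa only [prod_const, card_range] using prod_le_prod (s := range n)
      (fun i _ => pqInt_one_left_nonneg ht0 ht1 (k + i + 1))
      (fun i _ => pqInt_one_left_le ht0 ht1 (k + i + 1))
  rw [pqBinom_add_left, hsplit, mul_div_mul_left _ _ (hfact k).ne']
  exact div_le_div_of_nonneg_right hprod (hfact n).le

theorem pqBinom_one_left_succ_succ (ht0 : 0 ≤ t) (ht1 : t < 1) (n k : ℕ) :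
    pqBinom 1 t (n + 1 + (k + 1)) (k + 1)
      = pqBinom 1 t (n + (k + 1)) (k + 1) + t ^ (n + 1) * pqBinom 1 t (n + 1 + k) k := by
  have hfact := pqFact_one_left_pos ht0 ht1
  have hk := (pqInt_one_left_pos ht0 ht1 k.succ_ne_zero).ne'
  have hn := (pqInt_one_left_pos ht0 ht1 n.succ_ne_zero).ne'
  simp only [pqBinom_add_left]
  rw [show n + 1 + (k + 1) = (n + k + 1) + 1 by ring, show n + (k + 1) = n + k + 1 by ring,
    show n + 1 + k = n + k + 1 by ring, pqFact_succ _ _ (n + k + 1), pqFact_succ _ _ k,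
    pqFact_succ _ _ n, show n + k + 1 + 1 = (n + 1) + (k + 1) by ring, pqInt_one_left_add ht1.ne]
  have := (hfact k).ne'
  have := (hfact n).ne'
  have := (hfact (n + k + 1)).ne'
  field_simp

theorem pqBinom_one_left_succ_mul (ht0 : 0 ≤ t) (ht1 : t < 1) (n k : ℕ) :
    pqBinom 1 t (n + (k + 1)) (k + 1) * pqInt 1 t (k + 1)
      = pqBinom 1 t (n + k) k * pqInt 1 t (n + (k + 1)) := by
  have hfact := pqFact_one_left_pos ht0 ht1
  have hk := (pqInt_one_left_pos ht0 ht1 k.succ_ne_zero).ne'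
  simp only [pqBinom_add_left]
  rw [show n + (k + 1) = n + k + 1 by ring, pqFact_succ _ _ (n + k), pqFact_succ _ _ k]
  have := (hfact k).ne'
  have := (hfact n).ne'
  field_simp

theorem summable_pqBinom_one_left_mul_pow (ht0 : 0 ≤ t) (ht1 : t < 1) (hx0 : 0 ≤ x) (hx1 : x < 1)
    (n : ℕ) : Summable fun k => pqBinom 1 t (n + k) k * x ^ k :=
  .of_nonneg_of_le (fun k => mul_nonneg (pqBinom_one_left_nonneg ht0 ht1 n k) (pow_nonneg hx0 k))
    (fun k => mul_le_mul_of_nonneg_right (pqBinom_one_left_le ht0 ht1 n k) (pow_nonneg hx0 k))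
    ((summable_geometric_of_lt_one hx0 hx1).mul_left _)

theorem hasSum_pqBinom_one_left_mul_pow (ht0 : 0 ≤ t) (ht1 : t < 1) (hx0 : 0 ≤ x) (hx1 : x < 1)
    (n : ℕ) : HasSum (fun k => pqBinom 1 t (n + k) k * x ^ k) (∏ s ∈ range (n + 1), (1 - t ^ s * x))⁻¹ := by
  induction n with
  | zero =>
    convert (hasSum_geometric_of_lt_one hx0 hx1).congr_fun
      (g := fun k => pqBinom 1 t (0 + k) k * x ^ k) fun k => by
        rw [pqBinom_one_left_zero_add ht0 ht1, one_mul] using 1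
    simp
  | succ m ih =>
    -- Pascal's rule: `(1 - t ^ (m + 1) * x)` times the series for `m + 1` is the series for `m`.
    obtain ⟨A, hA⟩ := summable_pqBinom_one_left_mul_pow ht0 ht1 hx0 hx1 (m + 1)
    have hshift := (((hasSum_nat_add_iff' 1).2 hA).sub (hA.mul_left (t ^ (m + 1) * x))).congr_fun
      (g := fun k => pqBinom 1 t (m + (k + 1)) (k + 1) * x ^ (k + 1)) fun k => by
        rw [pqBinom_one_left_succ_succ ht0 ht1]
        ring
    have hm := (hasSum_nat_add_iff (f := fun k => pqBinom 1 t (m + k) k * x ^ k) 1).1 hshift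
    simp only [sum_range_one, pow_zero, mul_one, pqBinom_one_left_add_zero ht0 ht1] at hm
    have hfactor : 1 - t ^ (m + 1) * x ≠ 0 := by
      have := mul_lt_one_of_nonneg_of_lt_one_right (pow_le_one₀ ht0 ht1.le (n := m + 1)) hx0 hx1
      linarith
    convert hA using 1
    rw [prod_range_succ, mul_inv, ih.unique hm]
    field_simp
    ring

noncomputable def mkzNode (t : ℝ) (n k : ℕ) : ℝ := pqInt 1 t k / pqInt 1 t (n + k)

noncomputable def mkzWeight (t : ℝ) (n : ℕ) (x : ℝ) (k : ℕ) : ℝ :=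
  (∏ s ∈ range (n + 1), (1 - t ^ s * x)) * pqBinom 1 t (n + k) k * x ^ k

theorem mkzNode_zero (n : ℕ) : mkzNode t n 0 = 0 := by
  simp [mkzNode, pqInt]

theorem mkzNode_nonneg (ht0 : 0 ≤ t) (ht1 : t < 1) (n k : ℕ) : 0 ≤ mkzNode t n k :=
  div_nonneg (pqInt_one_left_nonneg ht0 ht1 k) (pqInt_one_left_nonneg ht0 ht1 (n + k))

theorem mkzNode_le_one (ht0 : 0 ≤ t) (ht1 : t < 1) (n k : ℕ) : mkzNode t n k ≤ 1 := by
  rcases eq_or_ne k 0 with rfl | hk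
  · rw [mkzNode_zero]
    exact zero_le_one
  · rw [mkzNode, div_le_one (pqInt_one_left_pos ht0 ht1 (by omega))]
    exact pqInt_one_left_mono ht0 ht1 (by omega)

theorem mkzNode_succ_sub (ht0 : 0 ≤ t) (ht1 : t < 1) {n k : ℕ} (hnk : n + k ≠ 0) :
    mkzNode t n (k + 1) - mkzNode t n k
      = t ^ k * pqInt 1 t n / (pqInt 1 t (n + k + 1) * pqInt 1 t (n + k)) := by
  have h₁ := (pqInt_one_left_pos ht0 ht1 hnk).ne'
  have h₂ := (pqInt_one_left_pos ht0 ht1 (by omega : n + k + 1 ≠ 0)).ne'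
  have ht := sub_ne_zero.2 ht1.ne'
  rw [mkzNode, mkzNode, ← add_assoc, div_sub_div _ _ h₂ h₁]
  congr 1
  simp only [pqInt_one_left]
  field_simp
  ring

theorem mkzNode_le_succ (ht0 : 0 ≤ t) (ht1 : t < 1) (n k : ℕ) :
    mkzNode t n k ≤ mkzNode t n (k + 1) := by
  rcases eq_or_ne (n + k) 0 with hnk | hnk
  · obtain rfl : k = 0 := by omega
    rw [mkzNode_zero]
    exact mkzNode_nonneg ht0 ht1 n 1
  · have := mkzNode_succ_sub ht0 ht1 hnk
    have hnonneg := pqInt_one_left_nonneg ht0 ht1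
    have : 0 ≤ t ^ k * pqInt 1 t n / (pqInt 1 t (n + k + 1) * pqInt 1 t (n + k)) :=
      div_nonneg (mul_nonneg (pow_nonneg ht0 k) (hnonneg n)) (mul_nonneg (hnonneg _) (hnonneg _))
    linarith

theorem mkzNode_succ_le (ht0 : 0 ≤ t) (ht1 : t < 1) (n k : ℕ) :
    mkzNode t n (k + 1) ≤ mkzNode t n k + (pqInt 1 t (n + 1))⁻¹ := by
  rcases eq_or_ne n 0 with rfl | hn
  · rw [zero_add, pqInt_one_left_one ht1.ne, inv_one]
    linarith [mkzNode_le_one ht0 ht1 0 (k + 1), mkzNode_nonneg ht0 ht1 0 k]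
  · have hmono := pqInt_one_left_mono ht0 ht1
    have hn₀ := pqInt_one_left_pos ht0 ht1 hn
    have hn₁ := pqInt_one_left_pos ht0 ht1 n.succ_ne_zero
    have hnk₀ : 0 < pqInt 1 t (n + k) := hn₀.trans_le (hmono (by omega))
    have hnk₁ : 0 < pqInt 1 t (n + k + 1) := hn₁.trans_le (hmono (by omega))
    have hprod : pqInt 1 t n * pqInt 1 t (n + 1) ≤ pqInt 1 t (n + k + 1) * pqInt 1 t (n + k) := by
      rw [mul_comm]
      exact mul_le_mul (hmono (by omega)) (hmono (by omega)) hn₀.le hnk₁.le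
    have hbound : t ^ k * pqInt 1 t n / (pqInt 1 t (n + k + 1) * pqInt 1 t (n + k))
        ≤ (pqInt 1 t (n + 1))⁻¹ := by
      rw [div_le_iff₀ (mul_pos hnk₁ hnk₀), inv_mul_eq_div, le_div_iff₀ hn₁]
      calc t ^ k * pqInt 1 t n * pqInt 1 t (n + 1) ≤ 1 * (pqInt 1 t n * pqInt 1 t (n + 1)) := by
            rw [mul_assoc]
            exact mul_le_mul_of_nonneg_right (pow_le_one₀ ht0 ht1.le) (mul_pos hn₀ hn₁).le
        _ ≤ _ := by rw [one_mul]; exact hprod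
    linarith [mkzNode_succ_sub ht0 ht1 (n := n) (k := k) (by omega)]

theorem mkzWeight_nonneg (ht0 : 0 ≤ t) (ht1 : t < 1) (hx0 : 0 ≤ x) (hx1 : x ≤ 1) (n k : ℕ) :
    0 ≤ mkzWeight t n x k := by
  have hfactor : ∀ s ∈ range (n + 1), 0 ≤ 1 - t ^ s * x := fun s _ => by
    nlinarith [pow_le_one₀ ht0 ht1.le (n := s), pow_nonneg ht0 s]
  exact mul_nonneg (mul_nonneg (prod_nonneg hfactor) (pqBinom_one_left_nonneg ht0 ht1 n k))
    (pow_nonneg hx0 k)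

theorem hasSum_mkzWeight (ht0 : 0 ≤ t) (ht1 : t < 1) (hx0 : 0 ≤ x) (hx1 : x < 1) (n : ℕ) :
    HasSum (mkzWeight t n x) 1 := by
  have hfactor : ∀ s ∈ range (n + 1), 1 - t ^ s * x ≠ 0 := fun s _ => by
    nlinarith [pow_le_one₀ ht0 ht1.le (n := s), pow_nonneg ht0 s]
  have := (hasSum_pqBinom_one_left_mul_pow ht0 ht1 hx0 hx1 n).mul_left
    (∏ s ∈ range (n + 1), (1 - t ^ s * x))
  rw [mul_inv_cancel₀ (prod_ne_zero_iff.2 hfactor)] at this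
  exact this.congr_fun fun k => mul_assoc _ _ _

theorem mkzWeight_succ_mul_mkzNode_succ (ht0 : 0 ≤ t) (ht1 : t < 1) (n k : ℕ) :
    mkzWeight t n x (k + 1) * mkzNode t n (k + 1) = x * mkzWeight t n x k := by
  have hnk := (pqInt_one_left_pos ht0 ht1 (by omega : n + (k + 1) ≠ 0)).ne'
  rw [mkzWeight, mkzWeight, mkzNode, mul_div_assoc', div_eq_iff hnk]
  calc _ = (∏ s ∈ range (n + 1), (1 - t ^ s * x)) * x ^ (k + 1) *
        (pqBinom 1 t (n + (k + 1)) (k + 1) * pqInt 1 t (k + 1)) := by ring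
    _ = _ := by
      rw [pqBinom_one_left_succ_mul ht0 ht1]
      ring

theorem HasSum.mkzWeight_mul_mkzNode_mul (ht0 : 0 ≤ t) (ht1 : t < 1) {n : ℕ} {h : ℕ → ℝ} {s : ℝ}
    (hs : HasSum (fun k => mkzWeight t n x k * h (k + 1)) s) :
    HasSum (fun k => mkzWeight t n x k * mkzNode t n k * h k) (x * s) := by
  have := (hs.mul_left x).congr_fun
    (g := fun k => mkzWeight t n x (k + 1) * mkzNode t n (k + 1) * h (k + 1)) fun k => by
      rw [mkzWeight_succ_mul_mkzNode_succ ht0 ht1, mul_assoc]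
  simpa [mkzNode_zero] using
    (hasSum_nat_add_iff (f := fun k => mkzWeight t n x k * mkzNode t n k * h k) 1).1 this

theorem hasSum_mkzWeight_mul_mkzNode (ht0 : 0 ≤ t) (ht1 : t < 1) (hx0 : 0 ≤ x) (hx1 : x < 1)
    (n : ℕ) : HasSum (fun k => mkzWeight t n x k * mkzNode t n k) x := by
  simpa using ((hasSum_mkzWeight ht0 ht1 hx0 hx1 n).congr_fun fun k => mul_one _)
    |>.mkzWeight_mul_mkzNode_mul ht0 ht1 (h := 1)

theorem summable_mkzWeight_mul_mkzNode_succ (ht0 : 0 ≤ t) (ht1 : t < 1) (hx0 : 0 ≤ x)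
    (hx1 : x < 1) (n : ℕ) : Summable fun k => mkzWeight t n x k * mkzNode t n (k + 1) :=
  (hasSum_mkzWeight ht0 ht1 hx0 hx1 n).summable.of_nonneg_of_le
    (fun k => mul_nonneg (mkzWeight_nonneg ht0 ht1 hx0 hx1.le n k) (mkzNode_nonneg ht0 ht1 n _))
    fun k => mul_le_of_le_one_right (mkzWeight_nonneg ht0 ht1 hx0 hx1.le n k)
      (mkzNode_le_one ht0 ht1 n _)

end OneLeft

section Rescale

variable {p q : ℝ}

theorem pqInt_succ_eq_pow_mul (hp : p ≠ 0) (hpq : p ≠ q) (m : ℕ) :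
    pqInt p q (m + 1) = p ^ m * pqInt 1 (q / p) (m + 1) := by
  have h₁ := sub_ne_zero.2 hpq
  have h₂ : 1 - q / p ≠ 0 := by
    rwa [sub_ne_zero, ne_comm, Ne, div_eq_one_iff_eq hp, eq_comm]
  rw [pqInt, pqInt, one_pow, div_pow]
  field_simp
  ring

theorem pqFact_eq_pow_mul (hp : p ≠ 0) (hpq : p ≠ q) (n : ℕ) :
    pqFact p q n = p ^ (∑ i ∈ range n, i) * pqFact 1 (q / p) n := by
  rw [pqFact, pqFact, ← prod_pow_eq_pow_sum, ← prod_mul_distrib]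
  exact prod_congr rfl fun j _ => pqInt_succ_eq_pow_mul hp hpq j

theorem pqBinom_add_left_eq_pow_mul (hp : p ≠ 0) (hpq : p ≠ q) (n k : ℕ) :
    pqBinom p q (n + k) k = p ^ (k * n) * pqBinom 1 (q / p) (n + k) k := by
  have hpow : ∀ m : ℕ, p ^ m ≠ 0 := fun m => pow_ne_zero m hp
  simp only [pqBinom_add_left, pqFact_eq_pow_mul hp hpq, sum_range_id_add, pow_add]
  set a := p ^ (∑ i ∈ range k, i) * p ^ (∑ i ∈ range n, i)
  calc _ = a * (p ^ (k * n) * pqFact 1 (q / p) (n + k)) /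
        (a * (pqFact 1 (q / p) k * pqFact 1 (q / p) n)) := by ring
    _ = _ := by rw [mul_div_mul_left _ _ (mul_ne_zero (hpow _) (hpow _)), mul_div_assoc]

theorem prod_pow_sub_mul_eq_pow_mul (hp : p ≠ 0) (n : ℕ) (x : ℝ) :
    ∏ s ∈ range n, (p ^ s - q ^ s * x)
      = p ^ (∑ s ∈ range n, s) * ∏ s ∈ range n, (1 - (q / p) ^ s * x) := by
  rw [← prod_pow_eq_pow_sum, ← prod_mul_distrib]
  refine prod_congr rfl fun s _ => ?_
  rw [div_pow]
  field_simp

theorem pqInt_ratio_eq_mkzNode (hp : p ≠ 0) (hpq : p ≠ q) (n k : ℕ) :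
    p ^ n * pqInt p q k / pqInt p q (n + k) = mkzNode (q / p) n k := by
  cases k with
  | zero => simp [pqInt, mkzNode_zero]
  | succ j =>
    rw [mkzNode, ← add_assoc, pqInt_succ_eq_pow_mul hp hpq, pqInt_succ_eq_pow_mul hp hpq,
      ← mul_assoc, ← pow_add, mul_div_mul_left _ _ (pow_ne_zero _ hp)]

theorem mkz_eq_tsum (hp : p ≠ 0) (hpq : p ≠ q) (n : ℕ) (f : ℝ → ℝ) {x : ℝ} (hx : x ≠ 1) :
    mkz p q n f x = ∑' k, mkzWeight (q / p) n x k * f (mkzNode (q / p) n k) := by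
  have hexp : n * (n + 1) / 2 = ∑ s ∈ range (n + 1), s := by
    rw [sum_range_id, Nat.add_sub_cancel, mul_comm]
  rw [mkz, if_neg hx, ← tsum_mul_left]
  refine tsum_congr fun k => ?_
  rw [pqBinom_add_left_eq_pow_mul hp hpq, prod_pow_sub_mul_eq_pow_mul hp,
    pqInt_ratio_eq_mkzNode hp hpq, mkzWeight, hexp]
  have := pow_ne_zero (k * n) hp
  have := pow_ne_zero (∑ s ∈ range (n + 1), s) hp
  generalize ∏ s ∈ range (n + 1), (1 - (q / p) ^ s * x) = P
  field_simp

end Rescale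

theorem mkz_sq_general (p q : ℝ) (hq : 0 < q) (hqp : q < p)
    (n : ℕ) (x : ℝ) (hx : x ∈ Set.Icc (0 : ℝ) 1) :
    x ^ 2 ≤ mkz p q n (fun t => t ^ 2) x ∧
    mkz p q n (fun t => t ^ 2) x ≤ p ^ n / pqInt p q (n + 1) * x + x ^ 2 := by
  obtain ⟨hx0, hx1⟩ := hx
  have hp : p ≠ 0 := (hq.trans hqp).ne'
  have ht0 : 0 ≤ q / p := div_nonneg hq.le (hq.trans hqp).le
  have ht1 : q / p < 1 := (div_lt_one (hq.trans hqp)).2 hqp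
  set c := (pqInt 1 (q / p) (n + 1))⁻¹
  have hc : p ^ n / pqInt p q (n + 1) = c := by
    rw [pqInt_succ_eq_pow_mul hp hqp.ne', div_mul_cancel_left₀ (pow_ne_zero n hp)]
  have hc0 : 0 ≤ c := inv_nonneg.2 (pqInt_one_left_nonneg ht0 ht1 _)
  rw [hc]
  rcases hx1.lt_or_eq with hx1 | rfl
  swap
  · simp only [mkz, if_true]
    constructor <;> linarith
  set W := mkzWeight (q / p) n x
  set node := mkzNode (q / p) n
  have hW0 := mkzWeight_nonneg ht0 ht1 hx0 hx1.le n
  have hmean := hasSum_mkzWeight_mul_mkzNode ht0 ht1 hx0 hx1 n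
  obtain ⟨y, hy⟩ := summable_mkzWeight_mul_mkzNode_succ ht0 ht1 hx0 hx1 n
  have hsecond : HasSum (fun k => W k * node k ^ 2) (x * y) := by
    simpa [sq, mul_assoc] using hy.mkzWeight_mul_mkzNode_mul ht0 ht1
  have hxy : x ≤ y := hasSum_le (fun k => mul_le_mul_of_nonneg_left
    (mkzNode_le_succ ht0 ht1 n k) (hW0 k)) hmean hy
  have hyx : y ≤ x + c := hasSum_le (fun k => show W k * node (k + 1) ≤ W k * node k + W k * c by
    rw [← mul_add]
    exact mul_le_mul_of_nonneg_left (mkzNode_succ_le ht0 ht1 n k) (hW0 k)) hy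
    (by simpa only [one_mul] using hmean.add ((hasSum_mkzWeight ht0 ht1 hx0 hx1 n).mul_right c))
  rw [mkz_eq_tsum hp hqp.ne' n _ hx1.ne, hsecond.tsum_eq]
  constructor <;> nlinarith

theorem mkz_sq (p q : ℝ) (hq : 0 < q) (hqp : q < p) (hp : p ≤ 1)
    (n : ℕ) (x : ℝ) (hx : x ∈ Set.Icc (0 : ℝ) 1) :
    x ^ 2 ≤ mkz p q n (fun t => t ^ 2) x ∧
    mkz p q n (fun t => t ^ 2) x ≤ p ^ n / pqInt p q (n + 1) * x + x ^ 2 :=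
  mkz_sq_general p q hq hqp n x hx
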